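/- If G is a maximal outerplanar graph on n ≥ 3 vertices, then fd(G) < 17n/19. -/

import Mathlib

/-- `D` is a `k`-fair dominating set of `G`: a dominating set such that every
vertex outside `D` has exactly `k` neighbors in `D`. -/
def IsKFDSet {V : Type*} (G : SimpleGraph V) (k : ℕ) (D : Set V) : Prop :=
  (∀ v ∉ D, ∃ u ∈ D, G.Adj u v) ∧ ∀ v ∉ D, (G.neighborSet v ∩ D).ncard = k

/-- `D` is a fair dominating set of `G`: a `k`-fair dominating set for some `k ≥ 1`. -/
def IsFDSet {V : Type*} (G : SimpleGraph V) (D : Set V) : Prop :=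
  ∃ k ≥ 1, IsKFDSet G k D

/-- The fair domination number of `G`. -/
noncomputable def fd {V : Type*} (G : SimpleGraph V) : ℕ :=
  sInf {m | ∃ D : Set V, IsFDSet G D ∧ D.ncard = m}

/-- The 1-fair domination number of `G`. -/
noncomputable def fd1 {V : Type*} (G : SimpleGraph V) : ℕ :=
  sInf {m | ∃ D : Set V, IsKFDSet G 1 D ∧ D.ncard = m}

/-- `Q` is an out-regular set: all its vertices have the same positive number of
neighbors outside `Q`. -/
def IsORSet {V : Type*} (G : SimpleGraph V) (Q : Set V) : Prop :=
  ∃ k ≥ 1, ∀ u ∈ Q, (G.neighborSet u \ Q).ncard = k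

/-- The out-regular number of `G`. -/
noncomputable def outr {V : Type*} (G : SimpleGraph V) : ℕ :=
  sSup {m | ∃ Q : Set V, IsORSet G Q ∧ Q.ncard = m}

/-- The domination number of `G`. -/
noncomputable def domNum {V : Type*} (G : SimpleGraph V) : ℕ :=
  sInf {m | ∃ D : Set V, (∀ v ∉ D, ∃ u ∈ D, G.Adj u v) ∧ D.ncard = m}

/-- The corona of a graph `H`: attach one new pendant leaf to each vertex of `H`. -/
def corona {α : Type*} (H : SimpleGraph α) : SimpleGraph (α ⊕ α) :=
  SimpleGraph.fromRel (fun a b =>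
    match a, b with
    | Sum.inl x, Sum.inl y => H.Adj x y
    | Sum.inl x, Sum.inr y => x = y
    | _, _ => False)

/-- `T` is (isomorphic to) the corona of a tree. -/
def IsCoronaOfTree {V : Type*} (T : SimpleGraph V) : Prop :=
  ∃ (α : Type) (_ : Fintype α) (H : SimpleGraph α), H.IsTree ∧ Nonempty (T ≃g corona H)

/-- `G` is a maximal outerplanar graph (MOP) on `n + 3` vertices: a triangulation of a
polygon. The vertices are placed on a cycle `0, 1, ..., n + 2`; `G` contains all the
polygon edges, no two edges of `G` cross (with respect to this cyclic placement), and
`G` has exactly `2(n+3) - 3` edges, i.e. the polygon is fully triangulated. -/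
def IsMOP {n : ℕ} (G : SimpleGraph (Fin (n + 3))) : Prop :=
  (∀ i : Fin (n + 3), G.Adj i (i + 1)) ∧
  (∀ a b c d : Fin (n + 3), G.Adj a b → G.Adj c d → ¬(a < c ∧ c < b ∧ b < d)) ∧
  G.edgeSet.ncard = 2 * (n + 3) - 3



set_option linter.unusedSectionVars false
set_option maxHeartbeats 1000000

open Finset

section NCGraph
variable {m : ℕ}

/-- non-crossing condition -/
def NCross (G : SimpleGraph (Fin m)) : Prop :=
  ∀ a b c d : Fin m, G.Adj a b → G.Adj c d → ¬(a < c ∧ c < b ∧ b < d)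

variable (G : SimpleGraph (Fin m)) [DecidableRel G.Adj]

/-- ordered edges within S -/
def EIn (S : Finset (Fin m)) : Finset (Fin m × Fin m) :=
  (S ×ˢ S).filter fun p => p.1 < p.2 ∧ G.Adj p.1 p.2

variable {G}

lemma mem_EIn {S : Finset (Fin m)} {p : Fin m × Fin m} :
    p ∈ EIn G S ↔ p.1 ∈ S ∧ p.2 ∈ S ∧ p.1 < p.2 ∧ G.Adj p.1 p.2 := by
  simp [EIn, Finset.mem_filter, Finset.mem_product, and_assoc]

lemma card_le_two_of (v : Fin m) (S : Finset (Fin m))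
    (hA : ∀ w1 ∈ S, ∀ w2 ∈ S, G.Adj v w1 → G.Adj v w2 → v < w1 → v < w2 → w1 = w2)
    (hB : ∀ w1 ∈ S, ∀ w2 ∈ S, G.Adj v w1 → G.Adj v w2 → w1 < v → w2 < v → w1 = w2) :
    (S.filter (G.Adj v)).card ≤ 2 := by
  by_contra h
  push_neg at h
  obtain ⟨a, b, c, ha, hb, hc, hab, hac, hbc⟩ := Finset.two_lt_card_iff.mp h
  simp only [Finset.mem_filter] at ha hb hc
  rcases lt_trichotomy v a with h1 | h1 | h1
  · rcases lt_trichotomy v b with h2 | h2 | h2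
    · exact hab (hA a ha.1 b hb.1 ha.2 hb.2 h1 h2)
    · exact G.irrefl (h2 ▸ hb.2)
    · rcases lt_trichotomy v c with h3 | h3 | h3
      · exact hac (hA a ha.1 c hc.1 ha.2 hc.2 h1 h3)
      · exact G.irrefl (h3 ▸ hc.2)
      · exact hbc (hB b hb.1 c hc.1 hb.2 hc.2 h2 h3)
  · exact G.irrefl (h1 ▸ ha.2)
  · rcases lt_trichotomy v b with h2 | h2 | h2
    · rcases lt_trichotomy v c with h3 | h3 | h3
      · exact hbc (hA b hb.1 c hc.1 hb.2 hc.2 h2 h3)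
      · exact G.irrefl (h3 ▸ hc.2)
      · exact hac (hB a ha.1 c hc.1 ha.2 hc.2 h1 h3)
    · exact G.irrefl (h2 ▸ hb.2)
    · exact hab (hB a ha.1 b hb.1 ha.2 hb.2 h1 h2)

lemma exists_small_deg (hNC : NCross G) (S : Finset (Fin m)) (hS : S.Nonempty) :
    ∃ v ∈ S, (S.filter (G.Adj v)).card ≤ 2 := by
  classical
  set T := (EIn G S).filter
    (fun p => ((S.filter fun c => p.1 < c ∧ c < p.2)).Nonempty) with hT
  by_cases hTne : T.Nonempty
  · -- choose edge minimizing inside count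
    obtain ⟨p, hpT, hmin⟩ := Finset.exists_min_image T
      (fun p => ((S.filter fun c => p.1 < c ∧ c < p.2)).card) hTne
    obtain ⟨hpE, hpI⟩ := Finset.mem_filter.mp hpT
    obtain ⟨ha, hb, hlt, hadj⟩ := mem_EIn.mp hpE
    set a := p.1
    set b := p.2
    set ins := (S.filter fun c => a < c ∧ c < b) with hins
    have hinsne : ins.Nonempty := hpI
    set c := ins.min' hinsne with hc
    have hcmem : c ∈ ins := ins.min'_mem hinsne
    obtain ⟨hcS, hac, hcb⟩ := Finset.mem_filter.mp hcmem
    refine ⟨c, hcS, card_le_two_of c S ?_ ?_⟩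
    · -- above: at most one neighbor above c
      intro w1 hw1 w2 hw2 hcw1 hcw2 h1 h2
      by_contra hne
      -- wlog w1 < w2
      have key : ∀ x y : Fin m, x ∈ S → y ∈ S → G.Adj c x → G.Adj c y →
          c < x → c < y → x < y → False := by
        intro x y hx hy hax hay hcx hcy hxy
        -- y ≤ b, else crossing with (a,b)
        have hyb : y ≤ b := by
          by_contra hby
          push_neg at hby
          exact hNC a b c y hadj hay ⟨hac, hcb, hby⟩
        -- edge (c, y) is in T with strictly smaller inside count
        have hmemE : (c, y) ∈ EIn G S := mem_EIn.mpr ⟨hcS, hy, hcy, hay⟩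
        have hinsy : x ∈ (S.filter fun z => c < z ∧ z < y) :=
          Finset.mem_filter.mpr ⟨hx, hcx, hxy⟩
        have hmemT : (c, y) ∈ T :=
          Finset.mem_filter.mpr ⟨hmemE, ⟨x, hinsy⟩⟩
        have hsub : (S.filter fun z => c < z ∧ z < y) ⊆ ins.erase c := by
          intro z hz
          obtain ⟨hzS, hcz, hzy⟩ := Finset.mem_filter.mp hz
          exact Finset.mem_erase.mpr ⟨ne_of_gt hcz,
            Finset.mem_filter.mpr ⟨hzS, lt_trans hac hcz, lt_of_lt_of_le hzy hyb⟩⟩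
        have hlt' : (S.filter fun z => c < z ∧ z < y).card < ins.card :=
          lt_of_le_of_lt (Finset.card_le_card hsub)
            (Finset.card_erase_lt_of_mem hcmem)
        have := hmin (c, y) hmemT
        simp only at this
        omega
      rcases lt_or_gt_of_ne hne with h | h
      · exact absurd (key w1 w2 hw1 hw2 hcw1 hcw2 h1 h2 h) (fun f => f)
      · exact absurd (key w2 w1 hw2 hw1 hcw2 hcw1 h2 h1 h) (fun f => f)
    · -- below: every neighbor below c equals a
      intro w1 hw1 w2 hw2 hcw1 hcw2 h1 h2
      have key : ∀ x : Fin m, x ∈ S → G.Adj c x → x < c → x = a := by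
        intro x hx hax hxc
        rcases lt_trichotomy x a with h | h | h
        · exact absurd ⟨h, hac, hcb⟩ (hNC x c a b hax.symm hadj)
        · exact h
        · -- x in inside, x < c contradicts minimality of c
          have : x ∈ ins := Finset.mem_filter.mpr ⟨hx, h, lt_trans hxc hcb⟩
          have := ins.min'_le x this
          exact absurd hxc (not_lt.mpr this)
      rw [key w1 hw1 hcw1 h1, key w2 hw2 hcw2 h2]
  · -- no edge has an interior point: everyone has degree ≤ 2
    obtain ⟨v, hv⟩ := hS
    refine ⟨v, hv, card_le_two_of v S ?_ ?_⟩
    · intro w1 hw1 w2 hw2 h1 h2 hv1 hv2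
      by_contra hne
      have key : ∀ x y : Fin m, x ∈ S → y ∈ S → G.Adj v x → G.Adj v y →
          v < x → v < y → x < y → False := by
        intro x y hx hy hax hay hvx hvy hxy
        have hmemE : (v, y) ∈ EIn G S := mem_EIn.mpr ⟨hv, hy, hvy, hay⟩
        have : (v, y) ∈ T := Finset.mem_filter.mpr
          ⟨hmemE, ⟨x, Finset.mem_filter.mpr ⟨hx, hvx, hxy⟩⟩⟩
        exact hTne ⟨_, this⟩
      rcases lt_or_gt_of_ne hne with h | h
      · exact key w1 w2 hw1 hw2 h1 h2 hv1 hv2 h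
      · exact key w2 w1 hw2 hw1 h2 h1 hv2 hv1 h
    · intro w1 hw1 w2 hw2 h1 h2 hv1 hv2
      by_contra hne
      have key : ∀ x y : Fin m, x ∈ S → y ∈ S → G.Adj v x → G.Adj v y →
          x < v → y < v → x < y → False := by
        intro x y hx hy hax hay hxv hyv hxy
        have hmemE : (x, v) ∈ EIn G S := mem_EIn.mpr ⟨hx, hv, hxv, hax.symm⟩
        have : (x, v) ∈ T := Finset.mem_filter.mpr
          ⟨hmemE, ⟨y, Finset.mem_filter.mpr ⟨hy, hxy, hyv⟩⟩⟩
        exact hTne ⟨_, this⟩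
      rcases lt_or_gt_of_ne hne with h | h
      · exact key w1 w2 hw1 hw2 h1 h2 hv1 hv2 h
      · exact key w2 w1 hw2 hw1 h2 h1 hv2 hv1 h

lemma eIn_card (hNC : NCross G) (S : Finset (Fin m)) (hS : 2 ≤ S.card) :
    (EIn G S).card + 3 ≤ 2 * S.card := by
  classical
  induction S using Finset.strongInduction with
  | _ S ih =>
    rcases eq_or_lt_of_le hS with h2 | h3
    · -- card = 2
      obtain ⟨x, y, hxy, hSxy⟩ := Finset.card_eq_two.mp h2.symm
      have hmem : ∀ p ∈ EIn G S, p = (x, y) ∨ p = (y, x) := by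
        intro p hp
        obtain ⟨hp1, hp2, hplt, -⟩ := mem_EIn.mp hp
        subst hSxy
        simp only [Finset.mem_insert, Finset.mem_singleton] at hp1 hp2
        rcases hp1 with h|h <;> rcases hp2 with h'|h'
        · exact absurd (by rw [h, h'] at hplt; exact hplt) (lt_irrefl x)
        · exact Or.inl (Prod.ext h h')
        · exact Or.inr (Prod.ext h h')
        · exact absurd (by rw [h, h'] at hplt; exact hplt) (lt_irrefl y)
      have : (EIn G S).card ≤ 1 := by
        apply Finset.card_le_one.mpr
        intro p hp q hq
        have hplt := (mem_EIn.mp hp).2.2.1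
        have hqlt := (mem_EIn.mp hq).2.2.1
        rcases hmem p hp with h|h <;> rcases hmem q hq with h'|h'
        · rw [h, h']
        · rw [h] at hplt; rw [h'] at hqlt; exact absurd hqlt (asymm hplt)
        · rw [h] at hplt; rw [h'] at hqlt; exact absurd hqlt (asymm hplt)
        · rw [h, h']
      omega
    · -- card ≥ 3
      obtain ⟨v, hv, hdeg⟩ := exists_small_deg hNC S
        (Finset.card_pos.mp (by omega))
      set S' := S.erase v with hS'
      have hcard' : S'.card = S.card - 1 := Finset.card_erase_of_mem hv
      have hsub : S' ⊂ S := Finset.erase_ssubset hv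
      have ihS' := ih S' hsub (by omega)
      have hkey : ∀ r ∈ (EIn G S) \ (EIn G S'), r.1 = v ∨ r.2 = v := by
        intro r hr
        obtain ⟨hrE, hrN⟩ := Finset.mem_sdiff.mp hr
        obtain ⟨hr1, hr2, hrlt, hradj⟩ := mem_EIn.mp hrE
        by_contra hcon
        push_neg at hcon
        exact hrN (mem_EIn.mpr ⟨Finset.mem_erase.mpr ⟨hcon.1, hr1⟩,
          Finset.mem_erase.mpr ⟨hcon.2, hr2⟩, hrlt, hradj⟩)
      have hEcard : (EIn G S).card ≤ (EIn G S').card + (S.filter (G.Adj v)).card := by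
        have h1 : (EIn G S).card ≤ ((EIn G S) \ (EIn G S')).card + (EIn G S').card :=
          Finset.card_le_card_sdiff_add_card
        have h2 : ((EIn G S) \ (EIn G S')).card ≤ (S.filter (G.Adj v)).card := by
          apply Finset.card_le_card_of_injOn (fun p => if p.1 = v then p.2 else p.1)
          · intro p hp
            obtain ⟨hp1, hp2, hplt, hpadj⟩ := mem_EIn.mp (Finset.mem_sdiff.mp hp).1
            rcases hkey p hp with h | h
            · simp only [h, if_pos rfl]
              exact Finset.mem_filter.mpr ⟨hp2, h ▸ hpadj⟩
            · have hne : p.1 ≠ v := fun hc => lt_irrefl v (by rw [hc] at hplt; rw [h] at hplt; exact hplt)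
              simp only [if_neg hne]
              exact Finset.mem_filter.mpr ⟨hp1, G.adj_symm (h ▸ hpadj)⟩
          · intro p hp q hq hpq
            rw [Finset.mem_coe] at hp hq
            obtain ⟨hp1, hp2, hplt, hpadj⟩ := mem_EIn.mp (Finset.mem_sdiff.mp hp).1
            obtain ⟨hq1, hq2, hqlt, hqadj⟩ := mem_EIn.mp (Finset.mem_sdiff.mp hq).1
            simp only at hpq
            by_cases e1 : p.1 = v <;> by_cases e2 : q.1 = v
            · rw [if_pos e1, if_pos e2] at hpq
              exact Prod.ext (e1.trans e2.symm) hpq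
            · exfalso
              have hq2v : q.2 = v := (hkey q hq).resolve_left e2
              rw [if_pos e1, if_neg e2] at hpq
              rw [e1] at hplt; rw [hq2v] at hqlt; rw [hpq] at hplt
              exact absurd hqlt (asymm hplt)
            · exfalso
              have hp2v : p.2 = v := (hkey p hp).resolve_left e1
              rw [if_neg e1, if_pos e2] at hpq
              rw [e2] at hqlt; rw [hp2v] at hplt; rw [hpq] at hplt
              exact absurd hqlt (asymm hplt)
            · have hp2v : p.2 = v := (hkey p hp).resolve_left e1
              have hq2v : q.2 = v := (hkey q hq).resolve_left e2
              rw [if_neg e1, if_neg e2] at hpq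
              exact Prod.ext hpq (hp2v.trans hq2v.symm)
        omega
      omega

lemma eIn_univ_card : (EIn G Finset.univ).card = G.edgeSet.ncard := by
  classical
  rw [Set.ncard_eq_toFinset_card']
  refine Finset.card_bij (fun p _ => s(p.1, p.2)) ?_ ?_ ?_
  · intro p hp
    obtain ⟨-, -, -, hadj⟩ := mem_EIn.mp hp
    simp only [Set.mem_toFinset, SimpleGraph.mem_edgeSet]
    exact hadj
  · intro p hp q hq h
    obtain ⟨-, -, hplt, -⟩ := mem_EIn.mp hp
    obtain ⟨-, -, hqlt, -⟩ := mem_EIn.mp hq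
    rcases Sym2.eq_iff.mp h with ⟨h1, h2⟩ | ⟨h1, h2⟩
    · exact Prod.ext h1 h2
    · exfalso; rw [h1] at hplt; rw [← h2] at hqlt; exact absurd hqlt (asymm hplt)
  · intro e he
    simp only [Set.mem_toFinset, SimpleGraph.mem_edgeSet] at he
    induction e with
    | _ x y =>
      rcases lt_trichotomy x y with h | h | h
      · exact ⟨(x, y), mem_EIn.mpr ⟨Finset.mem_univ _, Finset.mem_univ _, h, he⟩, rfl⟩
      · exact absurd (h ▸ he) (G.irrefl)
      · exact ⟨(y, x), mem_EIn.mpr ⟨Finset.mem_univ _, Finset.mem_univ _, h, he.symm⟩,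
          Sym2.eq_swap⟩

end NCGraph

section AddEdge
variable {m : ℕ} {G : SimpleGraph (Fin m)}

lemma adj_of_nocross (hNC : NCross G) (hcard : G.edgeSet.ncard = 2 * m - 3) (hm : 3 ≤ m)
    {p q : Fin m} (hpq : p < q)
    (h1 : ∀ c d : Fin m, G.Adj c d → ¬(p < c ∧ c < q ∧ q < d))
    (h2 : ∀ c d : Fin m, G.Adj c d → ¬(c < p ∧ p < d ∧ d < q)) : G.Adj p q := by
  classical
  by_contra hadj
  set G' := G ⊔ SimpleGraph.fromEdgeSet {s(p, q)} with hG'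
  have hadj' : ∀ a b : Fin m, G'.Adj a b ↔ G.Adj a b ∨ ((a = p ∧ b = q) ∨ (a = q ∧ b = p)) := by
    intro a b
    rw [hG', SimpleGraph.sup_adj, SimpleGraph.fromEdgeSet_adj]
    simp only [Set.mem_singleton_iff]
    constructor
    · rintro (h | ⟨h, hne⟩)
      · exact Or.inl h
      · exact Or.inr (Sym2.eq_iff.mp h)
    · rintro (h | (⟨ha, hb⟩ | ⟨ha, hb⟩))
      · exact Or.inl h
      · exact Or.inr ⟨by rw [ha, hb], by rw [ha, hb]; exact ne_of_lt hpq⟩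
      · exact Or.inr ⟨by rw [ha, hb]; exact Sym2.eq_swap, by rw [ha, hb]; exact (ne_of_lt hpq).symm⟩
  have hNC' : NCross G' := by
    intro a b c d hab hcd ⟨g1, g2, g3⟩
    rcases (hadj' a b).mp hab with hab' | hab' <;>
      rcases (hadj' c d).mp hcd with hcd' | hcd'
    · exact hNC a b c d hab' hcd' ⟨g1, g2, g3⟩
    · rcases hcd' with ⟨hc, hd⟩ | ⟨hc, hd⟩
      · rw [hc] at g1 g2; rw [hd] at g3
        exact h2 a b hab' ⟨g1, g2, g3⟩
      · rw [hc] at g2; rw [hd] at g3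
        exact absurd hpq (asymm (lt_trans g2 g3))
    · rcases hab' with ⟨ha, hb⟩ | ⟨ha, hb⟩
      · rw [ha] at g1; rw [hb] at g2 g3
        exact h1 c d hcd' ⟨g1, g2, g3⟩
      · rw [ha] at g1; rw [hb] at g2
        exact absurd (lt_trans g1 g2) (asymm hpq)
    · rcases hab' with ⟨ha, hb⟩ | ⟨ha, hb⟩ <;> rcases hcd' with ⟨hc, hd⟩ | ⟨hc, hd⟩
      · rw [ha] at g1; rw [hc] at g1; exact lt_irrefl _ g1
      · rw [hc] at g2; rw [hb] at g2; exact lt_irrefl _ g2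
      · rw [ha] at g1; rw [hc] at g1; exact absurd (lt_trans g1 hpq) (lt_irrefl _)
      · rw [ha] at g1; rw [hc] at g1; exact lt_irrefl _ g1
  letI : DecidableRel G.Adj := Classical.decRel _
  letI : DecidableRel G'.Adj := Classical.decRel _
  have hsub : insert (p, q) (EIn G Finset.univ) ⊆ EIn G' Finset.univ := by
    intro r hr
    rcases Finset.mem_insert.mp hr with h | h
    · subst h
      exact mem_EIn.mpr ⟨Finset.mem_univ _, Finset.mem_univ _, hpq,
        (hadj' p q).mpr (Or.inr (Or.inl ⟨rfl, rfl⟩))⟩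
    · obtain ⟨h1', h2', h3', h4'⟩ := mem_EIn.mp h
      exact mem_EIn.mpr ⟨h1', h2', h3', (hadj' _ _).mpr (Or.inl h4')⟩
  have hnotmem : (p, q) ∉ EIn G Finset.univ := by
    intro h
    exact hadj (mem_EIn.mp h).2.2.2
  have hcard1 : (EIn G Finset.univ).card + 1 ≤ (EIn G' Finset.univ).card := by
    have := Finset.card_le_card hsub
    rwa [Finset.card_insert_of_notMem hnotmem] at this
  have hEG : (EIn G Finset.univ).card = 2 * m - 3 := by
    rw [eIn_univ_card, hcard]
  have hbound := eIn_card hNC' (Finset.univ : Finset (Fin m))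
    (by simp only [Finset.card_univ, Fintype.card_fin]; omega)
  rw [Finset.card_univ, Fintype.card_fin] at hbound
  omega

end AddEdge


section Helpers
variable {m : ℕ} [NeZero m]

lemma val_add_one (hm : 2 ≤ m) (v : Fin m) :
    (v + 1).val = if v.val + 1 = m then 0 else v.val + 1 := by
  have h : (v + 1).val = (v.val + (1 : Fin m).val) % m := rfl
  rw [Fin.val_one', Nat.mod_eq_of_lt (by omega : 1 < m)] at h
  rw [h]
  split_ifs with h2
  · rw [h2, Nat.mod_self]
  · exact Nat.mod_eq_of_lt (by have := v.isLt; omega)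

lemma val_sub_one (hm : 2 ≤ m) (v : Fin m) :
    (v - 1).val = if v.val = 0 then m - 1 else v.val - 1 := by
  have h : (v - 1).val = (m - (1 : Fin m).val + v.val) % m := rfl
  rw [Fin.val_one', Nat.mod_eq_of_lt (by omega : 1 < m)] at h
  rw [h]
  split_ifs with h2
  · rw [h2, Nat.add_zero]
    exact Nat.mod_eq_of_lt (by omega)
  · have h3 : m - 1 + v.val = (v.val - 1) + m := by
      have := v.isLt
      omega
    rw [h3, Nat.add_mod_right]
    exact Nat.mod_eq_of_lt (by have := v.isLt; omega)

lemma val_sub_one' (hm : 2 ≤ m) (v : Fin m) :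
    ((v : ℕ) = 0 ∧ ((v - 1 : Fin m) : ℕ) = m - 1) ∨
    ((v : ℕ) ≠ 0 ∧ ((v - 1 : Fin m) : ℕ) = (v : ℕ) - 1) := by
  have h := val_sub_one hm v
  by_cases h0 : (v : ℕ) = 0
  · exact Or.inl ⟨h0, by rw [h, if_pos h0]⟩
  · exact Or.inr ⟨h0, by rw [h, if_neg h0]⟩

lemma val_add_one' (hm : 2 ≤ m) (v : Fin m) :
    ((v : ℕ) + 1 = m ∧ ((v + 1 : Fin m) : ℕ) = 0) ∨
    ((v : ℕ) + 1 ≠ m ∧ ((v + 1 : Fin m) : ℕ) = (v : ℕ) + 1) := by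
  have h := val_add_one hm v
  by_cases h0 : (v : ℕ) + 1 = m
  · exact Or.inl ⟨h0, by rw [h, if_pos h0]⟩
  · exact Or.inr ⟨h0, by rw [h, if_neg h0]⟩

/-- strict cyclic betweenness on naturals -/
def CB (x y z : ℕ) : Prop := (x < y ∧ y < z) ∨ (y < z ∧ z < x) ∨ (z < x ∧ x < y)

omit [NeZero m] in
lemma not_cyclcross {G : SimpleGraph (Fin m)} (hNC : NCross G) {a b c d : Fin m}
    (hab : G.Adj a b) (hcd : G.Adj c d) :
    ¬(CB a.val c.val b.val ∧ CB b.val d.val a.val) := by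
  have H1 := hNC a b c d hab hcd
  have H2 := hNC a b d c hab hcd.symm
  have H3 := hNC b a c d hab.symm hcd
  have H4 := hNC b a d c hab.symm hcd.symm
  have H5 := hNC c d a b hcd hab
  have H6 := hNC c d b a hcd hab.symm
  have H7 := hNC d c a b hcd.symm hab
  have H8 := hNC d c b a hcd.symm hab.symm
  simp only [Fin.lt_def, not_and, not_lt] at H1 H2 H3 H4 H5 H6 H7 H8
  unfold CB
  omega

end Helpers

section MOP
variable {m : ℕ} [NeZero m] {G : SimpleGraph (Fin m)} [DecidableRel G.Adj]

lemma adj_succ_self (hcyc : ∀ i : Fin m, G.Adj i (i + 1)) (v : Fin m) :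
    G.Adj v (v + 1) := hcyc v

lemma adj_pred_self (hcyc : ∀ i : Fin m, G.Adj i (i + 1)) (v : Fin m) :
    G.Adj v (v - 1) := by
  have := hcyc (v - 1)
  rw [sub_add_cancel] at this
  exact this.symm

lemma pred_ne_succ (hm : 5 ≤ m) (v : Fin m) : v - 1 ≠ v + 1 := by
  intro h
  have h1 := val_sub_one (by omega) v
  have h2 := val_add_one (by omega) v
  rw [h] at h1
  rw [h2] at h1
  have := v.isLt
  split_ifs at h1 <;> omega

lemma deg_ge_two (hcyc : ∀ i : Fin m, G.Adj i (i + 1)) (hm : 5 ≤ m) (v : Fin m) :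
    2 ≤ G.degree v := by
  have hsub : {v - 1, v + 1} ⊆ G.neighborFinset v := by
    intro w hw
    rcases Finset.mem_insert.mp hw with h | h
    · rw [h]; exact G.mem_neighborFinset v _ |>.mpr (adj_pred_self hcyc v)
    · rw [Finset.mem_singleton.mp h]
      exact G.mem_neighborFinset v _ |>.mpr (adj_succ_self hcyc v)
  calc 2 = ({v - 1, v + 1} : Finset (Fin m)).card := by
        rw [Finset.card_insert_of_notMem (by simp [pred_ne_succ hm v]), Finset.card_singleton]
    _ ≤ _ := Finset.card_le_card hsub
  
lemma nbrs_of_deg_two (hcyc : ∀ i : Fin m, G.Adj i (i + 1)) (hm : 5 ≤ m) {v : Fin m}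
    (h : G.degree v = 2) : ∀ w, G.Adj v w → (w = v - 1 ∨ w = v + 1) := by
  have hsub : {v - 1, v + 1} ⊆ G.neighborFinset v := by
    intro w hw
    rcases Finset.mem_insert.mp hw with h | h
    · rw [h]; exact G.mem_neighborFinset v _ |>.mpr (adj_pred_self hcyc v)
    · rw [Finset.mem_singleton.mp h]
      exact G.mem_neighborFinset v _ |>.mpr (adj_succ_self hcyc v)
  have hcard : (G.neighborFinset v).card ≤ ({v - 1, v + 1} : Finset (Fin m)).card := by
    rw [SimpleGraph.card_neighborFinset_eq_degree, h,
      Finset.card_insert_of_notMem (by simp [pred_ne_succ hm v]), Finset.card_singleton]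
  have heq := Finset.eq_of_subset_of_card_le hsub hcard
  intro w hw
  have : w ∈ G.neighborFinset v := (G.mem_neighborFinset v w).mpr hw
  rw [← heq] at this
  rcases Finset.mem_insert.mp this with h | h
  · exact Or.inl h
  · exact Or.inr (Finset.mem_singleton.mp h)

lemma nbrs_of_deg_three (hcyc : ∀ i : Fin m, G.Adj i (i + 1)) (hm : 5 ≤ m) {v : Fin m}
    (h : G.degree v = 3) : ∃ y : Fin m, y ≠ v - 1 ∧ y ≠ v + 1 ∧ y ≠ v ∧ G.Adj v y ∧
      (∀ w, G.Adj v w → (w = v - 1 ∨ w = v + 1 ∨ w = y)) := by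
  have hsub : {v - 1, v + 1} ⊆ G.neighborFinset v := by
    intro w hw
    rcases Finset.mem_insert.mp hw with h | h
    · rw [h]; exact G.mem_neighborFinset v _ |>.mpr (adj_pred_self hcyc v)
    · rw [Finset.mem_singleton.mp h]
      exact G.mem_neighborFinset v _ |>.mpr (adj_succ_self hcyc v)
  have hc2 : ({v - 1, v + 1} : Finset (Fin m)).card = 2 := by
    rw [Finset.card_insert_of_notMem (by simp [pred_ne_succ hm v]), Finset.card_singleton]
  have hsd : ((G.neighborFinset v) \ {v - 1, v + 1}).card = 1 := by
    rw [Finset.card_sdiff_of_subset hsub, SimpleGraph.card_neighborFinset_eq_degree, h, hc2]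
  obtain ⟨y, hy⟩ := Finset.card_eq_one.mp hsd
  have hymem : y ∈ (G.neighborFinset v) \ {v - 1, v + 1} := by rw [hy]; exact Finset.mem_singleton_self y
  obtain ⟨hynbr, hynot⟩ := Finset.mem_sdiff.mp hymem
  simp only [Finset.mem_insert, Finset.mem_singleton, not_or] at hynot
  have hyadj : G.Adj v y := (G.mem_neighborFinset v y).mp hynbr
  refine ⟨y, hynot.1, hynot.2, fun hc => G.irrefl (hc ▸ hyadj), hyadj, ?_⟩
  intro w hw
  by_cases hw1 : w = v - 1
  · exact Or.inl hw1
  by_cases hw2 : w = v + 1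
  · exact Or.inr (Or.inl hw2)
  have : w ∈ (G.neighborFinset v) \ {v - 1, v + 1} := Finset.mem_sdiff.mpr
    ⟨(G.mem_neighborFinset v w).mpr hw, by simp [hw1, hw2]⟩
  rw [hy] at this
  exact Or.inr (Or.inr (Finset.mem_singleton.mp this))


lemma no_adj_ears (hcyc : ∀ i : Fin m, G.Adj i (i + 1)) (hNC : NCross G)
    (hcard : G.edgeSet.ncard = 2 * m - 3) (hm : 10 ≤ m) (u : Fin m)
    (hu : G.degree u = 2) (hv : G.degree (u + 1) = 2) : False := by
  have hnbru := nbrs_of_deg_two hcyc (by omega) hu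
  have hnbrv := nbrs_of_deg_two hcyc (by omega) hv
  have ha := val_sub_one' (by omega : 2 ≤ m) u
  have hb := val_add_one' (by omega : 2 ≤ m) u
  have hb2 := val_add_one' (by omega : 2 ≤ m) (u + 1)
  have hUlt := u.isLt
  have hadj : ¬ G.Adj (u - 1) (u + 1) := by
    intro hadj
    rcases hnbrv (u - 1) hadj.symm with h | h
    · rw [add_sub_cancel_right] at h
      have := congrArg Fin.val h
      omega
    · have := congrArg Fin.val h
      omega
  rcases lt_trichotomy (u - 1) (u + 1) with hlt | heq | hgt
  · refine hadj (adj_of_nocross hNC hcard (by omega) hlt ?_ ?_)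
    · intro c d hcd g
      obtain ⟨g1, g2, g3⟩ := g
      rw [Fin.lt_def] at g1 g2 g3 hlt
      have hor : c.val = u.val ∨ d.val = u.val := by omega
      rcases hor with h | h
      · rw [Fin.ext h] at hcd
        rcases hnbru d hcd with h' | h' <;>
          (have := congrArg Fin.val h'; omega)
      · rw [Fin.ext h] at hcd
        rcases hnbru c hcd.symm with h' | h' <;>
          (have := congrArg Fin.val h'; omega)
    · intro c d hcd g
      obtain ⟨g1, g2, g3⟩ := g
      rw [Fin.lt_def] at g1 g2 g3 hlt
      have hor : c.val = u.val ∨ d.val = u.val := by omega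
      rcases hor with h | h
      · rw [Fin.ext h] at hcd
        rcases hnbru d hcd with h' | h' <;>
          (have := congrArg Fin.val h'; omega)
      · rw [Fin.ext h] at hcd
        rcases hnbru c hcd.symm with h' | h' <;>
          (have := congrArg Fin.val h'; omega)
  · exact absurd heq (pred_ne_succ (by omega) u)
  · refine hadj (adj_of_nocross hNC hcard (by omega) hgt ?_ ?_).symm
    · intro c d hcd g
      obtain ⟨g1, g2, g3⟩ := g
      rw [Fin.lt_def] at g1 g2 g3 hgt
      have hor : c.val = u.val ∨ d.val = u.val := by omega
      rcases hor with h | h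
      · rw [Fin.ext h] at hcd
        rcases hnbru d hcd with h' | h' <;>
          (have := congrArg Fin.val h'; omega)
      · rw [Fin.ext h] at hcd
        rcases hnbru c hcd.symm with h' | h' <;>
          (have := congrArg Fin.val h'; omega)
    · intro c d hcd g
      obtain ⟨g1, g2, g3⟩ := g
      rw [Fin.lt_def] at g1 g2 g3 hgt
      have hor : c.val = u.val ∨ d.val = u.val := by omega
      rcases hor with h | h
      · rw [Fin.ext h] at hcd
        rcases hnbru d hcd with h' | h' <;>
          (have := congrArg Fin.val h'; omega)
      · rw [Fin.ext h] at hcd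
        rcases hnbru c hcd.symm with h' | h' <;>
          (have := congrArg Fin.val h'; omega)

lemma cross_helper (hNC : NCross G) (hm : 10 ≤ m) {u y c d : Fin m}
    (hadJ : G.Adj u y) (hcd : G.Adj c d)
    (hnbr : ∀ w, G.Adj u w → w = u - 1 ∨ w = u + 1 ∨ w = y)
    (hy1 : y ≠ u + 1) (hy2 : y ≠ u - 1)
    (b : Fin m) (hb : b = u + 1 ∨ b = u - 1)
    (hint : ((b : ℕ) < c ∧ (c : ℕ) < y ∧ (y : ℕ) < d) ∨
            ((c : ℕ) < b ∧ (b : ℕ) < d ∧ (d : ℕ) < y) ∨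
            ((y : ℕ) < c ∧ (c : ℕ) < b ∧ (b : ℕ) < d) ∨
            ((c : ℕ) < y ∧ (y : ℕ) < d ∧ (d : ℕ) < b)) : False := by
  have ha' := val_sub_one' (by omega : 2 ≤ m) u
  have hb' := val_add_one' (by omega : 2 ≤ m) u
  have hy1' : (y : ℕ) ≠ ((u + 1 : Fin m) : ℕ) := fun h => hy1 (Fin.ext h)
  have hy2' : (y : ℕ) ≠ ((u - 1 : Fin m) : ℕ) := fun h => hy2 (Fin.ext h)
  have hyu' : (y : ℕ) ≠ (u : ℕ) := by
    intro h
    have : y = u := Fin.ext h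
    rw [this] at hadJ
    exact G.irrefl hadJ
  have hbv : (b : ℕ) = ((u + 1 : Fin m) : ℕ) ∨ (b : ℕ) = ((u - 1 : Fin m) : ℕ) := by
    rcases hb with h | h
    · exact Or.inl (congrArg Fin.val h)
    · exact Or.inr (congrArg Fin.val h)
  have hUlt := u.isLt
  have hYlt := y.isLt
  have hClt := c.isLt
  have hDlt := d.isLt
  have hor : (c : ℕ) = (u : ℕ) ∨ (d : ℕ) = (u : ℕ) ∨
      (CB (u : ℕ) (c : ℕ) (y : ℕ) ∧ CB (y : ℕ) (d : ℕ) (u : ℕ)) ∨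
      (CB (u : ℕ) (d : ℕ) (y : ℕ) ∧ CB (y : ℕ) (c : ℕ) (u : ℕ)) := by
    unfold CB
    omega
  rcases hor with h | h | h | h
  · have hc : c = u := Fin.ext h
    rw [hc] at hcd
    rcases hnbr d hcd with h' | h' | h' <;> (have := congrArg Fin.val h'; omega)
  · have hd : d = u := Fin.ext h
    rw [hd] at hcd
    rcases hnbr c hcd.symm with h' | h' | h' <;> (have := congrArg Fin.val h'; omega)
  · exact not_cyclcross hNC hadJ hcd h
  · exact not_cyclcross hNC hadJ hcd.symm h

open Fin.CommRing in
lemma no_chord_deg3 (hcyc : ∀ i : Fin m, G.Adj i (i + 1)) (hNC : NCross G)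
    (hcard : G.edgeSet.ncard = 2 * m - 3) (hm : 10 ≤ m) {u y : Fin m}
    (hu : G.degree u = 3) (hy : G.degree y = 3) (hadj : G.Adj u y)
    (hy1 : y ≠ u + 1) (hy2 : y ≠ u - 1) : False := by
  obtain ⟨z, hz1, hz2, hz3, hzadj, hznbr⟩ := nbrs_of_deg_three hcyc (by omega) hu
  have hyz : y = z := by
    rcases hznbr y hadj with h | h | h
    · exact absurd h hy2
    · exact absurd h hy1
    · exact h
  have hnbr : ∀ w, G.Adj u w → w = u - 1 ∨ w = u + 1 ∨ w = y := by
    intro w hw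
    rcases hznbr w hw with h | h | h
    · exact Or.inl h
    · exact Or.inr (Or.inl h)
    · exact Or.inr (Or.inr (h.trans hyz.symm))
  obtain ⟨z', hz1', hz2', hz3', hzadj', hznbr'⟩ := nbrs_of_deg_three hcyc (by omega) hy
  have huz' : u = z' := by
    rcases hznbr' u hadj.symm with h | h | h
    · exfalso
      apply hy1
      have h2 : y - 1 = u := h.symm
      rwa [sub_eq_iff_eq_add] at h2
    · exfalso
      apply hy2
      rw [h]
      rw [add_sub_cancel_right]
    · exact h
  have hnbry : ∀ w, G.Adj y w → w = y - 1 ∨ w = y + 1 ∨ w = u := by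
    intro w hw
    rcases hznbr' w hw with h | h | h
    · exact Or.inl h
    · exact Or.inr (Or.inl h)
    · exact Or.inr (Or.inr (h.trans huz'.symm))
  have hb' := val_add_one' (by omega : 2 ≤ m) u
  have ha' := val_sub_one' (by omega : 2 ≤ m) u
  have hUlt := u.isLt
  -- Step 1 : G.Adj (u+1) y
  have hA1 : G.Adj (u + 1) y := by
    rcases lt_trichotomy (u + 1) y with hlt | heq | hgt
    · refine adj_of_nocross hNC hcard (by omega) hlt ?_ ?_
      · intro e f hef g
        obtain ⟨g1, g2, g3⟩ := g
        rw [Fin.lt_def] at g1 g2 g3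
        exact absurd (cross_helper hNC hm hadj hef hnbr hy1 hy2 (u + 1) (Or.inl rfl)
          (Or.inl ⟨g1, g2, g3⟩)) not_false
      · intro e f hef g
        obtain ⟨g1, g2, g3⟩ := g
        rw [Fin.lt_def] at g1 g2 g3
        exact absurd (cross_helper hNC hm hadj hef hnbr hy1 hy2 (u + 1) (Or.inl rfl)
          (Or.inr (Or.inl ⟨g1, g2, g3⟩))) not_false
    · exact absurd heq.symm hy1
    · refine (adj_of_nocross hNC hcard (by omega) hgt ?_ ?_).symm
      · intro e f hef g
        obtain ⟨g1, g2, g3⟩ := g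
        rw [Fin.lt_def] at g1 g2 g3
        exact absurd (cross_helper hNC hm hadj hef hnbr hy1 hy2 (u + 1) (Or.inl rfl)
          (Or.inr (Or.inr (Or.inl ⟨g1, g2, g3⟩)))) not_false
      · intro e f hef g
        obtain ⟨g1, g2, g3⟩ := g
        rw [Fin.lt_def] at g1 g2 g3
        exact absurd (cross_helper hNC hm hadj hef hnbr hy1 hy2 (u + 1) (Or.inl rfl)
          (Or.inr (Or.inr (Or.inr ⟨g1, g2, g3⟩)))) not_false
  have hA2 : G.Adj (u - 1) y := by
    rcases lt_trichotomy (u - 1) y with hlt | heq | hgt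
    · refine adj_of_nocross hNC hcard (by omega) hlt ?_ ?_
      · intro e f hef g
        obtain ⟨g1, g2, g3⟩ := g
        rw [Fin.lt_def] at g1 g2 g3
        exact absurd (cross_helper hNC hm hadj hef hnbr hy1 hy2 (u - 1) (Or.inr rfl)
          (Or.inl ⟨g1, g2, g3⟩)) not_false
      · intro e f hef g
        obtain ⟨g1, g2, g3⟩ := g
        rw [Fin.lt_def] at g1 g2 g3
        exact absurd (cross_helper hNC hm hadj hef hnbr hy1 hy2 (u - 1) (Or.inr rfl)
          (Or.inr (Or.inl ⟨g1, g2, g3⟩))) not_false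
    · exact absurd heq.symm hy2
    · refine (adj_of_nocross hNC hcard (by omega) hgt ?_ ?_).symm
      · intro e f hef g
        obtain ⟨g1, g2, g3⟩ := g
        rw [Fin.lt_def] at g1 g2 g3
        exact absurd (cross_helper hNC hm hadj hef hnbr hy1 hy2 (u - 1) (Or.inr rfl)
          (Or.inr (Or.inr (Or.inl ⟨g1, g2, g3⟩)))) not_false
      · intro e f hef g
        obtain ⟨g1, g2, g3⟩ := g
        rw [Fin.lt_def] at g1 g2 g3
        exact absurd (cross_helper hNC hm hadj hef hnbr hy1 hy2 (u - 1) (Or.inr rfl)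
          (Or.inr (Or.inr (Or.inr ⟨g1, g2, g3⟩)))) not_false
  -- consequences
  have e1 : u + 1 = y - 1 := by
    rcases hnbry (u + 1) hA1.symm with h | h | h
    · exact h
    · exfalso
      exact G.ne_of_adj hadj (add_right_cancel h)
    · exfalso
      have := congrArg Fin.val h
      omega
  have e2 : u - 1 = y + 1 := by
    rcases hnbry (u - 1) hA2.symm with h | h | h
    · exfalso
      have : u = y := by
        have := congrArg (fun t => t + 1) h
        simpa [sub_add_cancel] using this
      exact G.ne_of_adj hadj this
    · exact h
    · exfalso
      have := congrArg Fin.val h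
      omega
  have h4 : (4 : Fin m) = 0 := by linear_combination e1 - e2
  have h4' : ((4 : ℕ) : Fin m) = ((0 : ℕ) : Fin m) := by
    push_cast
    exact h4
  have h4'' := congrArg Fin.val h4'
  rw [Fin.val_natCast, Fin.val_natCast] at h4''
  have h5 : (4 : ℕ) % m = (0 : ℕ) % m := h4''
  rw [Nat.mod_eq_of_lt (by omega), Nat.zero_mod] at h5
  omega

end MOP

section Indep
variable {m : ℕ} [NeZero m] {G : SimpleGraph (Fin m)} [DecidableRel G.Adj]


open Fin.CommRing in
/-- a set with only "cyclically consecutive" internal edges and nonfull support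
has an independent half -/
lemma indep_half (S : Finset (Fin m)) (hS : ∃ w : Fin m, w ∉ S)
    (hloc : ∀ u ∈ S, ∀ w ∈ S, G.Adj u w → w = u + 1 ∨ w = u - 1) :
    ∃ I ⊆ S, (∀ x ∈ I, ∀ y ∈ I, ¬G.Adj x y) ∧ S.card ≤ 2 * I.card := by
  induction S using Finset.strongInduction with
  | _ S ih =>
    rcases Finset.eq_empty_or_nonempty S with rfl | hne
    · exact ⟨∅, Finset.Subset.refl _, by simp, by simp⟩
    · -- find an arc start: u ∈ S with u - 1 ∉ S
      have harc : ∃ u ∈ S, u - 1 ∉ S := by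
        by_contra hcon
        push_neg at hcon
        obtain ⟨s, hs⟩ := hne
        have hall : ∀ k : ℕ, s - (k : Fin m) ∈ S := by
          intro k
          induction k with
          | zero => simpa using hs
          | succ k ihk =>
            have := hcon _ ihk
            have heq : s - ((k : Fin m) + 1) = s - (k : Fin m) - 1 := by ring
            rw [Nat.cast_add, Nat.cast_one, heq]
            exact this
        obtain ⟨w, hw⟩ := hS
        have : s - ((s - w : Fin m).val : Fin m) ∈ S := hall _
        rw [Fin.cast_val_eq_self, sub_sub_cancel] at this
        exact hw this
      obtain ⟨u, huS, hu1⟩ := harc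
      set S' := S \ {u, u + 1} with hS'
      have hssub : S' ⊂ S := by
        refine Finset.ssubset_iff_of_subset (Finset.sdiff_subset) |>.mpr ?_
        exact ⟨u, huS, by simp [hS']⟩
      have hS'card : S.card ≤ S'.card + 2 := by
        have h1 : S'.card + (S ∩ {u, u + 1}).card = S.card := by
          rw [hS']
          exact Finset.card_sdiff_add_card_inter S ({u, u + 1} : Finset (Fin m))
        have h2 : (S ∩ {u, u + 1}).card ≤ 2 := by
          calc (S ∩ {u, u + 1}).card ≤ ({u, u + 1} : Finset (Fin m)).card :=
                Finset.card_le_card (Finset.inter_subset_right)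
            _ ≤ 2 := Finset.card_insert_le _ _ |>.trans (by simp)
        have h3 : u ∈ S ∩ {u, u+1} := Finset.mem_inter.mpr ⟨huS, by simp⟩
        have h4 : 1 ≤ (S ∩ {u, u + 1}).card := Finset.card_pos.mpr ⟨u, h3⟩
        omega
      obtain ⟨I', hI'sub, hI'ind, hI'card⟩ := ih S' hssub
        ⟨hS.choose, fun h => hS.choose_spec (Finset.mem_sdiff.mp h).1⟩
        (fun a ha b hb hab => hloc a (Finset.mem_sdiff.mp ha).1 b (Finset.mem_sdiff.mp hb).1 hab)
      have huI' : u ∉ I' := fun h => by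
        have := hI'sub h
        rw [hS', Finset.mem_sdiff] at this
        exact this.2 (by simp)
      refine ⟨insert u I', ?_, ?_, ?_⟩
      · intro x hx
        rcases Finset.mem_insert.mp hx with rfl | hx
        · exact huS
        · exact (Finset.mem_sdiff.mp (hI'sub hx)).1
      · intro x hx y hy hadj
        rcases Finset.mem_insert.mp hx with hx0 | hx0 <;>
          rcases Finset.mem_insert.mp hy with hy0 | hy0
        · rw [hx0, hy0] at hadj
          exact G.irrefl hadj
        · rw [hx0] at hadj
          have hyS := Finset.mem_sdiff.mp (hI'sub hy0)
          rcases hloc u huS y hyS.1 hadj with h | h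
          · exact hyS.2 (by simp [h])
          · rw [h] at hyS
            exact hu1 hyS.1
        · rw [hy0] at hadj
          have hxS := Finset.mem_sdiff.mp (hI'sub hx0)
          rcases hloc u huS x hxS.1 hadj.symm with h | h
          · exact hxS.2 (by simp [h])
          · rw [h] at hxS
            exact hu1 hxS.1
        · exact hI'ind x hx0 y hy0 hadj
      · rw [Finset.card_insert_of_notMem huI']
        omega

lemma indep_third (hNC : NCross G) (S : Finset (Fin m)) :
    ∃ I ⊆ S, (∀ x ∈ I, ∀ y ∈ I, ¬G.Adj x y) ∧ S.card ≤ 3 * I.card := by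
  induction S using Finset.strongInduction with
  | _ S ih =>
    rcases Finset.eq_empty_or_nonempty S with rfl | hne
    · exact ⟨∅, Finset.Subset.refl _, by simp, by simp⟩
    · obtain ⟨v, hvS, hdeg⟩ := exists_small_deg hNC S hne
      set S' := S \ insert v (S.filter (G.Adj v)) with hS'
      have hssub : S' ⊂ S := by
        refine Finset.ssubset_iff_of_subset (Finset.sdiff_subset) |>.mpr ?_
        exact ⟨v, hvS, by simp [hS']⟩
      obtain ⟨I', hI'sub, hI'ind, hI'card⟩ := ih S' hssub
      have hvI' : v ∉ I' := fun h => by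
        have := hI'sub h
        rw [hS', Finset.mem_sdiff] at this
        exact this.2 (by simp)
      have hScard : S.card ≤ S'.card + 3 := by
        have h1 : S'.card + (S ∩ insert v (S.filter (G.Adj v))).card = S.card := by
          rw [hS']
          exact Finset.card_sdiff_add_card_inter S (insert v (S.filter (G.Adj v)))
        have h2 : (S ∩ insert v (S.filter (G.Adj v))).card ≤ 3 := by
          calc (S ∩ _).card ≤ (insert v (S.filter (G.Adj v))).card :=
                Finset.card_le_card (Finset.inter_subset_right)
            _ ≤ (S.filter (G.Adj v)).card + 1 := Finset.card_insert_le _ _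
            _ ≤ 3 := by omega
        omega
      refine ⟨insert v I', ?_, ?_, ?_⟩
      · intro x hx
        rcases Finset.mem_insert.mp hx with rfl | hx
        · exact hvS
        · exact (Finset.mem_sdiff.mp (hI'sub hx)).1
      · intro x hx y hy hadj
        rcases Finset.mem_insert.mp hx with hx0 | hx0 <;>
          rcases Finset.mem_insert.mp hy with hy0 | hy0
        · rw [hx0, hy0] at hadj
          exact G.irrefl hadj
        · rw [hx0] at hadj
          have hyS := Finset.mem_sdiff.mp (hI'sub hy0)
          exact hyS.2 (Finset.mem_insert.mpr (Or.inr (Finset.mem_filter.mpr ⟨hyS.1, hadj⟩)))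
        · rw [hy0] at hadj
          have hxS := Finset.mem_sdiff.mp (hI'sub hx0)
          exact hxS.2 (Finset.mem_insert.mpr (Or.inr (Finset.mem_filter.mpr ⟨hxS.1, hadj.symm⟩)))
        · exact hI'ind x hx0 y hy0 hadj
      · rw [Finset.card_insert_of_notMem hvI']
        omega

end Indep

section FD
variable {m : ℕ} {G : SimpleGraph (Fin m)} [DecidableRel G.Adj]

lemma fd_le_of_indep (Q : Finset (Fin m)) (d : ℕ) (hd1 : 1 ≤ d)
    (hdeg : ∀ v ∈ Q, G.degree v = d)
    (hind : ∀ x ∈ Q, ∀ y ∈ Q, ¬G.Adj x y) :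
    fd G ≤ m - Q.card := by
  apply Nat.sInf_le
  refine ⟨(↑Q : Set (Fin m))ᶜ, ⟨d, hd1, ?_, ?_⟩, ?_⟩
  · intro v hv
    simp only [Set.mem_compl_iff, Finset.mem_coe, not_not] at hv
    have hpos : 0 < G.degree v := by rw [hdeg v hv]; omega
    rw [← SimpleGraph.card_neighborFinset_eq_degree] at hpos
    obtain ⟨w, hw⟩ := Finset.card_pos.mp hpos
    have hadj := (G.mem_neighborFinset v w).mp hw
    refine ⟨w, ?_, hadj.symm⟩
    simp only [Set.mem_compl_iff, Finset.mem_coe]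
    intro hwQ
    exact hind v hv w hwQ hadj
  · intro v hv
    simp only [Set.mem_compl_iff, Finset.mem_coe, not_not] at hv
    have hset : G.neighborSet v ∩ (↑Q : Set (Fin m))ᶜ = G.neighborSet v := by
      apply Set.inter_eq_self_of_subset_left
      intro w hw
      simp only [Set.mem_compl_iff, Finset.mem_coe]
      intro hwQ
      exact hind v hv w hwQ hw
    rw [hset, Set.ncard_eq_toFinset_card']
    rw [← SimpleGraph.neighborFinset_def]
    rw [SimpleGraph.card_neighborFinset_eq_degree]
    exact hdeg v hv
  · rw [Set.ncard_eq_toFinset_card', Set.toFinset_compl, Finset.toFinset_coe,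
      Finset.card_compl, Fintype.card_fin]

end FD

/-- If `G` is a maximal outerplanar graph on `n ≥ 3` vertices, then `fd(G) < 17n/19`. -/
theorem fd_mop_lt {n : ℕ} (G : SimpleGraph (Fin (n + 3))) (hG : IsMOP G) :
    (fd G : ℚ) < 17 * (n + 3 : ℚ) / 19 := by
  classical
  obtain ⟨hcyc, hNC', hcard⟩ := hG
  have hNC : NCross G := hNC'
  letI : DecidableRel G.Adj := Classical.decRel _
  rw [lt_div_iff₀ (by norm_num : (0:ℚ) < 19)]
  by_cases hm : n + 3 ≤ 9
  · -- small case : use a single vertex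
    have hd1 : 1 ≤ G.degree (0 : Fin (n+3)) := by
      rw [← SimpleGraph.card_neighborFinset_eq_degree]
      exact Finset.card_pos.mpr ⟨0 + 1, (G.mem_neighborFinset _ _).mpr (hcyc 0)⟩
    have hfd : fd G ≤ (n + 3) - ({(0 : Fin (n+3))} : Finset (Fin (n+3))).card :=
      fd_le_of_indep {0} (G.degree 0) hd1
        (by intro v hv; rw [Finset.mem_singleton.mp hv])
        (by
          intro x hx y hy hadj
          rw [Finset.mem_singleton.mp hx, Finset.mem_singleton.mp hy] at hadj
          exact G.irrefl hadj)
    rw [Finset.card_singleton] at hfd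
    have h1 : (fd G : ℚ) ≤ (n : ℚ) + 2 := by
      have : fd G ≤ n + 2 := by omega
      exact_mod_cast this
    have h2 : (n : ℚ) ≤ 6 := by
      have : n ≤ 6 := by omega
      exact_mod_cast this
    linarith
  · -- main case : n + 3 ≥ 10
    push_neg at hm
    have hm10 : 10 ≤ n + 3 := hm
    have hdeg2 : ∀ v, 2 ≤ G.degree v := deg_ge_two hcyc (by omega)
    -- handshake
    have hedge : G.edgeFinset.card = 2 * (n + 3) - 3 := by
      rw [← hcard, ← SimpleGraph.coe_edgeFinset, Set.ncard_coe_finset]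
    have hsum : ∑ v : Fin (n+3), G.degree v = 4 * (n + 3) - 6 := by
      rw [SimpleGraph.sum_degrees_eq_twice_card_edges, hedge]
      omega
    -- degree classes
    set S2 := Finset.univ.filter (fun v : Fin (n+3) => G.degree v = 2) with hS2
    set S3 := Finset.univ.filter (fun v : Fin (n+3) => G.degree v = 3) with hS3
    set S4 := Finset.univ.filter (fun v : Fin (n+3) => G.degree v = 4) with hS4
    set S5 := Finset.univ.filter (fun v : Fin (n+3) => G.degree v = 5) with hS5
    -- counting inequality
    have hpt : ∀ v ∈ (Finset.univ : Finset (Fin (n+3))), 6 ≤ G.degree v +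
        (4 * (if G.degree v = 2 then 1 else 0) + 3 * (if G.degree v = 3 then 1 else 0) +
         2 * (if G.degree v = 4 then 1 else 0) + (if G.degree v = 5 then 1 else 0)) := by
      intro v _
      have := hdeg2 v
      split_ifs <;> omega
    have hsum2 : 6 * (n + 3) ≤ ∑ v : Fin (n+3), (G.degree v +
        (4 * (if G.degree v = 2 then 1 else 0) + 3 * (if G.degree v = 3 then 1 else 0) +
         2 * (if G.degree v = 4 then 1 else 0) + (if G.degree v = 5 then 1 else 0))) := by
      calc 6 * (n + 3) = ∑ _v : Fin (n+3), 6 := by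
            rw [Finset.sum_const, Finset.card_univ, Fintype.card_fin, smul_eq_mul]
            ring
        _ ≤ _ := Finset.sum_le_sum hpt
    have hexp : ∑ v : Fin (n+3), (G.degree v +
        (4 * (if G.degree v = 2 then 1 else 0) + 3 * (if G.degree v = 3 then 1 else 0) +
         2 * (if G.degree v = 4 then 1 else 0) + (if G.degree v = 5 then 1 else 0))) =
        (∑ v : Fin (n+3), G.degree v) + (4 * S2.card + 3 * S3.card + 2 * S4.card + S5.card) := by
      rw [Finset.sum_add_distrib, Finset.sum_add_distrib, Finset.sum_add_distrib,
        Finset.sum_add_distrib, ← Finset.mul_sum, ← Finset.mul_sum, ← Finset.mul_sum,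
        Finset.sum_boole, Finset.sum_boole, Finset.sum_boole, Finset.sum_boole]
      simp only [Nat.cast_id]
      rfl
    have hkey : 2 * (n + 3) + 6 ≤ 4 * S2.card + 3 * S3.card + 2 * S4.card + S5.card := by
      rw [hexp, hsum] at hsum2
      omega
    -- independent sets in each class
    have hI2 : ∀ x ∈ S2, ∀ y ∈ S2, ¬G.Adj x y := by
      intro x hx y hy hadj
      rw [hS2, Finset.mem_filter] at hx hy
      rcases nbrs_of_deg_two hcyc (by omega) hx.2 y hadj with h | h
      · refine no_adj_ears hcyc hNC hcard (by omega) y hy.2 ?_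
        rw [h, sub_add_cancel] at *
        exact hx.2
      · refine no_adj_ears hcyc hNC hcard (by omega) x hx.2 ?_
        rw [← h]
        exact hy.2
    have hS3loc : ∀ u ∈ S3, ∀ w ∈ S3, G.Adj u w → w = u + 1 ∨ w = u - 1 := by
      intro u hu w hw hadj
      rw [hS3, Finset.mem_filter] at hu hw
      obtain ⟨z, hz1, hz2, hz3, hzadj, hznbr⟩ := nbrs_of_deg_three hcyc (by omega) hu.2
      rcases hznbr w hadj with h | h | h
      · exact Or.inr h
      · exact Or.inl h
      · exfalso
        rw [h] at hadj
        exact no_chord_deg3 hcyc hNC hcard (by omega) hu.2 (h ▸ hw.2) hadj hz2 hz1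
    have hS3ne : ∃ w : Fin (n+3), w ∉ S3 := by
      by_contra hcon
      push_neg at hcon
      have hall : ∀ v : Fin (n+3), G.degree v = 3 := by
        intro v
        have := hcon v
        rw [hS3, Finset.mem_filter] at this
        exact this.2
      have : ∑ v : Fin (n+3), G.degree v = 3 * (n + 3) := by
        rw [Finset.sum_congr rfl (fun v _ => hall v), Finset.sum_const,
          Finset.card_univ, Fintype.card_fin, smul_eq_mul]
        ring
      omega
    obtain ⟨I3, hI3sub, hI3ind, hI3card⟩ := indep_half S3 hS3ne hS3loc
    obtain ⟨I4, hI4sub, hI4ind, hI4card⟩ := indep_third hNC S4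
    obtain ⟨I5, hI5sub, hI5ind, hI5card⟩ := indep_third hNC S5
    -- choose the best class
    have hbest : ∃ (Q : Finset (Fin (n+3))) (d : ℕ), 1 ≤ d ∧ (∀ v ∈ Q, G.degree v = d) ∧
        (∀ x ∈ Q, ∀ y ∈ Q, ¬G.Adj x y) ∧ 2 * (n + 3) + 6 ≤ 19 * Q.card := by
      have hors : 2 * (n + 3) + 6 ≤ 19 * S2.card ∨ 2 * (n + 3) + 6 ≤ 19 * I3.card ∨
          2 * (n + 3) + 6 ≤ 19 * I4.card ∨ 2 * (n + 3) + 6 ≤ 19 * I5.card := by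
        omega
      rcases hors with h | h | h | h
      · exact ⟨S2, 2, by omega, fun v hv => (Finset.mem_filter.mp hv).2, hI2, h⟩
      · exact ⟨I3, 3, by omega, fun v hv => (Finset.mem_filter.mp (hI3sub hv)).2, hI3ind, h⟩
      · exact ⟨I4, 4, by omega, fun v hv => (Finset.mem_filter.mp (hI4sub hv)).2, hI4ind, h⟩
      · exact ⟨I5, 5, by omega, fun v hv => (Finset.mem_filter.mp (hI5sub hv)).2, hI5ind, h⟩
    obtain ⟨Q, d, hd1, hdegQ, hindQ, hbig⟩ := hbest
    have hfd : fd G ≤ (n + 3) - Q.card := fd_le_of_indep Q d hd1 hdegQ hindQ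
    have hQle : Q.card ≤ n + 3 := by
      calc Q.card ≤ (Finset.univ : Finset (Fin (n+3))).card :=
            Finset.card_le_card (Finset.subset_univ Q)
        _ = n + 3 := by rw [Finset.card_univ, Fintype.card_fin]
    have hc1 : (fd G : ℚ) ≤ ((n : ℚ) + 3) - (Q.card : ℚ) := by
      have h := hfd
      have : (fd G : ℚ) ≤ ((n + 3 - Q.card : ℕ) : ℚ) := by exact_mod_cast h
      rw [Nat.cast_sub hQle] at this
      push_cast at this
      linarith
    have hc2 : 2 * ((n : ℚ) + 3) + 6 ≤ 19 * (Q.card : ℚ) := by exact_mod_cast hbig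
    linarith
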